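/- arXiv:2103.03217 — 7 statements merged into one kernel-verified Lean document; each statement's English description precedes it below -/
import Mathlib

section
/- If T : A^d → F is a semi-diagonal tensor (with d ≥ 2), then the max-flattening rank of T is at least |A|/(d-1). -/
/-- The `i`-flattening of a tensor `T : A^d → F`: the matrix whose rows are indexed by the
`i`-th coordinate and whose columns are indexed by the remaining coordinates (here represented
redundantly by full tuples; the entry ignores the `i`-th coordinate of the column index, so the
rank is the rank of the flattening matrix in the usual sense). -/
noncomputable def frank {F : Type} [Field F] {A : Type} [Fintype A] [DecidableEq A] {d : ℕ}
    (T : (Fin d → A) → F) (i : Fin d) : ℕ :=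
  Matrix.rank (Matrix.of fun (a : A) (v : Fin d → A) => T (Function.update v i a))

/-- The max-flattening rank. -/
noncomputable def mfrank {F : Type} [Field F] {A : Type} [Fintype A] [DecidableEq A] {d : ℕ}
    (T : (Fin d → A) → F) : ℕ :=
  Finset.univ.sup (fun i : Fin d => frank T i)

/-- `T : A^d → F` is semi-diagonal: nonzero on the diagonal, zero on tuples with pairwise
distinct coordinates. -/
def SemiDiagonal {F : Type} [Field F] {A : Type} {d : ℕ} (T : (Fin d → A) → F) : Prop :=
  (∀ a : A, T (fun _ => a) ≠ 0) ∧ (∀ v : Fin d → A, Function.Injective v → T v = 0)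

/-!
Pick a set `B` of at most `frank_{d-1} T` rows spanning the row space of the last flattening.
On `A \ B`, the tensor `v ↦ T (v, v₀)` of order `d - 1` is again semi-diagonal: for injective
`v`, the entry `T (v, v₀)` is a linear combination of the entries `T (v, b)`, `b ∈ B`, and these
vanish because `(v, b)` is injective. Its flattenings are submatrices of those of `T`, so induction
on `d` gives `|A| ≤ ∑_{i ≠ 0} frank_i T ≤ (d - 1) · mfrank T`.
-/

open Function Matrix Submodule

namespace Matrix

variable {F m n : Type} [Field F] [Fintype m] [Fintype n]

theorem exists_finset_card_le_rank_row_mem_span (M : Matrix m n F) :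
    ∃ B : Finset m, B.card ≤ M.rank ∧ ∀ a, M.row a ∈ span F (M.row '' B) := by
  obtain ⟨κ, ι, hι, hspan, hli⟩ := exists_linearIndependent' F M.row
  have : Fintype κ := have := Finite.of_injective ι hι; Fintype.ofFinite κ
  refine ⟨Finset.univ.map ⟨ι, hι⟩, ?_, fun a => ?_⟩
  · rw [Finset.card_map, Finset.card_univ, ← finrank_span_eq_card hli, hspan,
      rank_eq_finrank_span_row]
  · have hrange : M.row '' (Finset.univ.map ⟨ι, hι⟩ : Finset m) = Set.range (M.row ∘ ι) := by
      ext; simp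
    rw [hrange, hspan]
    exact subset_span (Set.mem_range_self a)

end Matrix

section Flattening

variable {F : Type} [Field F] {A : Type} {d : ℕ}

def flattening (T : (Fin d → A) → F) (i : Fin d) : Matrix A (Fin d → A) F :=
  Matrix.of fun a v => T (update v i a)

theorem frank_eq_rank_flattening [Fintype A] [DecidableEq A] (T : (Fin d → A) → F) (i : Fin d) :
    frank T i = (flattening T i).rank := rfl

theorem SemiDiagonal.isEmpty_of_le_one {T : (Fin d → A) → F} (hT : SemiDiagonal T) (hd : d ≤ 1) :
    IsEmpty A := by
  have : Subsingleton (Fin d) := Fin.subsingleton_iff_le_one.2 hd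
  exact ⟨fun a => hT.1 a (hT.2 _ (injective_of_subsingleton _))⟩

end Flattening

section TieLast

variable {F : Type} [Field F] {A : Type} {k : ℕ}

def tieLast (T : (Fin (k + 2) → A) → F) (p : A → Prop) : (Fin (k + 1) → Subtype p) → F :=
  fun v => T (Fin.snoc (fun i => (v i : A)) (v 0))

theorem frank_tieLast_succ_le [Fintype A] [DecidableEq A] (T : (Fin (k + 2) → A) → F)
    (p : A → Prop) [DecidablePred p] (i : Fin k) :
    frank (tieLast T p) i.succ ≤ frank T i.succ.castSucc := by
  have hsub : flattening (tieLast T p) i.succ = (flattening T i.succ.castSucc).submatrix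
      Subtype.val (fun v => Fin.snoc (fun j => (v j : A)) (v 0)) := by
    ext a v
    have hval : (fun j => (update v i.succ a j : A)) = update (fun j => (v j : A)) i.succ a :=
      funext (apply_update (fun _ => Subtype.val) v i.succ a)
    simp only [flattening, tieLast, of_apply, submatrix_apply, hval,
      update_of_ne (Fin.succ_ne_zero i).symm, Fin.snoc_update]
  rw [frank_eq_rank_flattening, frank_eq_rank_flattening, hsub]
  exact rank_submatrix_le _ _ _

theorem SemiDiagonal.tieLast_compl {T : (Fin (k + 2) → A) → F}
    (hT : SemiDiagonal T) {B : Finset A}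
    (hB : ∀ a, (flattening T (Fin.last _)).row a ∈ span F ((flattening T (Fin.last _)).row '' B)) :
    SemiDiagonal (tieLast T (· ∉ B)) := by
  refine ⟨fun a => ?_, fun v hv => ?_⟩
  · have hconst : (Fin.snoc (fun _ => (a : A)) (a : A) : Fin (k + 2) → A) = fun _ => (a : A) := by
      ext j
      induction j using Fin.lastCases <;> simp
    simpa only [tieLast, hconst] using hT.1 a
  · set c : Fin (k + 2) → A := Fin.snoc (fun i => (v i : A)) (v 0)
    show T c = 0
    have hvanish : ∀ b ∈ B, flattening T (Fin.last _) b c = 0 := fun b hb => by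
      simp only [flattening, of_apply, c, Fin.update_snoc_last]
      refine hT.2 _ (Fin.snoc_injective_of_injective (Subtype.val_injective.comp hv) ?_)
      rintro ⟨i, hi⟩
      exact (v i).2 (by simpa [← hi] using hb)
    have hker : span F ((flattening T (Fin.last _)).row '' B) ≤ LinearMap.ker (LinearMap.proj c) :=
      span_le.2 (by rintro _ ⟨b, hb, rfl⟩; exact hvanish b hb)
    simpa [flattening, c, Fin.update_snoc_last] using hker (hB (v 0))

end TieLast

section Main

variable {F : Type} [Field F]

theorem frank_le_mfrank {A : Type} [Fintype A] [DecidableEq A] {d : ℕ} (T : (Fin d → A) → F)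
    (i : Fin d) : frank T i ≤ mfrank T :=
  Finset.le_sup (Finset.mem_univ i)

theorem SemiDiagonal.card_le_sum_frank_succ {k : ℕ} {A : Type} [Fintype A] [DecidableEq A]
    {T : (Fin (k + 1) → A) → F} (hT : SemiDiagonal T) :
    Fintype.card A ≤ ∑ i : Fin k, frank T i.succ := by
  induction k generalizing A with
  | zero => simp [Fintype.card_eq_zero_iff.2 (hT.isEmpty_of_le_one le_rfl)]
  | succ k ih =>
    obtain ⟨B, hBcard, hB⟩ := (flattening T (Fin.last _)).exists_finset_card_le_rank_row_mem_span
    calc Fintype.card A = Fintype.card {a // a ∉ B} + B.card := by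
          rw [Fintype.card_subtype_compl, Fintype.card_coe, Nat.sub_add_cancel B.card_le_univ]
      _ ≤ ∑ i : Fin k, frank T i.succ.castSucc + frank T (Fin.last _) :=
        add_le_add ((ih (hT.tieLast_compl hB)).trans
          (Finset.sum_le_sum fun i _ => frank_tieLast_succ_le T _ i)) hBcard
      _ = ∑ i : Fin (k + 1), frank T i.succ := by
        rw [Fin.sum_univ_castSucc, Fin.succ_last]
        simp only [Fin.succ_castSucc]

end Main

theorem mfrank_of_semiDiagonal_general {F : Type} [Field F] {A : Type} [Fintype A] [DecidableEq A]
    {d : ℕ} (T : (Fin d → A) → F) (hT : SemiDiagonal T) :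
    Fintype.card A ≤ (d - 1) * mfrank T := by
  rcases d with _ | k
  · simp [Fintype.card_eq_zero_iff.2 (hT.isEmpty_of_le_one (Nat.zero_le 1))]
  · calc Fintype.card A ≤ ∑ i : Fin k, frank T i.succ := hT.card_le_sum_frank_succ
      _ ≤ ∑ _i : Fin k, mfrank T := Finset.sum_le_sum fun i _ => frank_le_mfrank T i.succ
      _ = (k + 1 - 1) * mfrank T := by simp

/-- If `T : A^d → F` is semi-diagonal (`d ≥ 2`), then `mfrank T ≥ |A| / (d-1)`. -/
theorem mfrank_of_semiDiagonal {F : Type} [Field F] {A : Type} [Fintype A] [DecidableEq A]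
    {d : ℕ} (hd : 2 ≤ d) (T : (Fin d → A) → F) (hT : SemiDiagonal T) :
    Fintype.card A ≤ (d - 1) * mfrank T :=
  mfrank_of_semiDiagonal_general T hT
end

section
/- For every field F and integers d ≥ 2 and n ≥ 1, there exists a semi-diagonal tensor T : A^d → F with |A| = n such that frank_i(T) = ⌈n/(d-1)⌉ for every i ∈ [d]. Concretely: partition A into m = ⌈n/(d-1)⌉ parts A_1,...,A_m of size at most d-1, and define T(a_1,...,a_d) = 1 if all of a_1,...,a_d lie in a common part A_j, and T(a_1,...,a_d) = 0 otherwise; then T is semi-diagonal and frank_i(T) = m for all i. -/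
/-- The bound `mfrank(T) ≥ ⌈|A|/(d-1)⌉` is best possible: partitioning `A = Fin n` into
`m = ⌈n/(d-1)⌉` consecutive blocks of size at most `d-1` (the block of `a` being `a / (d-1)`),
the tensor which is `1` exactly on tuples lying in a common block is semi-diagonal and has
every flattening rank equal to `m`. -/
theorem semiDiagonal_tensor_with_small_frank (F : Type) [Field F] {d n : ℕ}
    (hd : 2 ≤ d) (hn : 1 ≤ n) :
    ∃ T : (Fin d → Fin n) → F,
      T = (fun v => if ∀ j : Fin d, (v j : ℕ) / (d - 1) = (v ⟨0, by omega⟩ : ℕ) / (d - 1) then 1 else 0) ∧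
      SemiDiagonal T ∧ ∀ i : Fin d, frank T i = (n + (d - 1) - 1) / (d - 1) := by
  set e := d - 1 with he
  have he1 : 1 ≤ e := by omega
  set m := (n + e - 1) / e with hm
  set z : Fin d := ⟨0, by omega⟩ with hz
  set T : (Fin d → Fin n) → F :=
    fun v => if ∀ j : Fin d, (v j : ℕ) / e = (v z : ℕ) / e then 1 else 0 with hT
  -- block bound
  have hmeq : m = (n - 1) / e + 1 := by
    have : n + e - 1 = (n - 1) + e := by omega
    rw [hm, this, Nat.add_div_right _ he1]
  have hblock : ∀ a : Fin n, (a : ℕ) / e < m := by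
    intro a
    rw [hmeq]
    have : (a : ℕ) / e ≤ (n - 1) / e := Nat.div_le_div_right (by omega : (a : ℕ) ≤ n - 1)
    omega
  have hrep_lt : ∀ c : Fin m, c * e < n := by
    intro c
    have hc : (c : ℕ) ≤ m - 1 := by omega
    have : ((n - 1) / e) * e ≤ n - 1 := Nat.div_mul_le_self _ _
    have : (c : ℕ) * e ≤ ((n - 1) / e) * e := by
      apply Nat.mul_le_mul_right
      omega
    omega
  have hrep_div : ∀ c : Fin m, ((c : ℕ) * e) / e = c := fun c =>
    Nat.mul_div_cancel _ (by omega)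
  -- key rewriting of the flattening matrix entries
  have hM : ∀ (i : Fin d) (a : Fin n) (v : Fin d → Fin n),
      T (Function.update v i a)
        = if ∀ j : Fin d, j ≠ i → (v j : ℕ) / e = (a : ℕ) / e then 1 else 0 := by
    intro i a v
    rw [hT]
    apply if_congr _ rfl rfl
    set w := Function.update v i a with hw
    have hwi : w i = a := Function.update_self i a v
    have hwj : ∀ j, j ≠ i → w j = v j := fun j hj => Function.update_of_ne hj a v
    constructor
    · intro h j hj
      have h1 := h j
      have h2 := h i
      rw [hwi] at h2
      rw [hwj j hj] at h1
      rw [h1, h2]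
    · intro h
      have key : ∀ j, (w j : ℕ) / e = (a : ℕ) / e := by
        intro j
        by_cases hj : j = i
        · rw [hj, hwi]
        · rw [hwj j hj]; exact h j hj
      intro j
      rw [key j, key z]
  refine ⟨T, rfl, ⟨?_, ?_⟩, ?_⟩
  · intro a
    rw [hT]
    simp
  · intro v hv
    show (if ∀ j : Fin d, (v j : ℕ) / e = (v z : ℕ) / e then (1:F) else 0) = 0
    rw [if_neg]
    intro h
    have hf : Function.Injective (fun j : Fin d => (⟨(v j : ℕ) % e, Nat.mod_lt _ (by omega)⟩ : Fin e)) := by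
      intro j₁ j₂ hj
      have hmod : (v j₁ : ℕ) % e = (v j₂ : ℕ) % e := by
        simpa using hj
      apply hv
      apply Fin.ext
      have hq : (v j₁ : ℕ) / e = (v j₂ : ℕ) / e := (h j₁).trans (h j₂).symm
      have d1 := Nat.div_add_mod (v j₁ : ℕ) e
      have d2 := Nat.div_add_mod (v j₂ : ℕ) e
      rw [hq] at d1
      omega
    have := Fintype.card_le_of_injective _ hf
    simp at this
    omega
  · intro i
    apply le_antisymm
    · -- upper bound via factorization
      set P : Matrix (Fin n) (Fin m) F :=
        Matrix.of fun a c => if c = (⟨(a : ℕ) / e, hblock a⟩ : Fin m) then 1 else 0 with hP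
      set N : Matrix (Fin m) ((Fin d → Fin n)) F :=
        Matrix.of fun c v => if ∀ j : Fin d, j ≠ i → (v j : ℕ) / e = (c : ℕ) then 1 else 0 with hN
      have hfac : (Matrix.of fun (a : Fin n) (v : Fin d → Fin n) => T (Function.update v i a)) = P * N := by
        ext a v
        rw [Matrix.mul_apply]
        simp only [hP, hN, Matrix.of_apply, ite_mul, one_mul, zero_mul]
        rw [Finset.sum_ite_eq' (Finset.univ) (⟨(a : ℕ) / e, hblock a⟩ : Fin m)]
        simp only [Finset.mem_univ, if_true]
        exact hM i a v
      rw [frank, hfac]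
      calc (P * N).rank ≤ P.rank := Matrix.rank_mul_le_left P N
        _ ≤ Fintype.card (Fin m) := Matrix.rank_le_card_width P
        _ = m := Fintype.card_fin m
    · -- lower bound via an identity submatrix
      set r : Fin m → Fin n := fun c => ⟨c * e, hrep_lt c⟩ with hr
      set P₁ : Matrix (Fin m) (Fin n) F :=
        Matrix.of fun c a => if a = r c then 1 else 0 with hP1
      set P₂ : Matrix ((Fin d → Fin n)) (Fin m) F :=
        Matrix.of fun v c => if v = (fun _ => r c) then 1 else 0 with hP2
      set M : Matrix (Fin n) ((Fin d → Fin n)) F :=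
        Matrix.of fun (a : Fin n) (v : Fin d → Fin n) => T (Function.update v i a) with hMdef
      have hId : P₁ * M * P₂ = 1 := by
        ext c c'
        rw [Matrix.mul_apply]
        have col : ∀ v, (P₁ * M) c v = M (r c) v := by
          intro v
          rw [Matrix.mul_apply]
          simp only [hP1, Matrix.of_apply, ite_mul, one_mul, zero_mul]
          rw [Finset.sum_ite_eq' (Finset.univ) (r c)]
          simp
        simp only [hP2, Matrix.of_apply, mul_ite, mul_one, mul_zero]
        rw [Finset.sum_ite_eq' (Finset.univ) (fun _ => r c')]
        simp only [Finset.mem_univ, if_true]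
        rw [col, hMdef]
        simp only [Matrix.of_apply]
        rw [hM i (r c) (fun _ => r c')]
        have hrc : ((r c : Fin n) : ℕ) / e = (c : ℕ) := hrep_div c
        have hrc' : ((r c' : Fin n) : ℕ) / e = (c' : ℕ) := hrep_div c'
        have hj0 : ∃ j : Fin d, j ≠ i := by
          rcases Nat.lt_or_ge 0 (i : ℕ) with h0 | h0
          · exact ⟨⟨0, by omega⟩, fun hh => by
              have : (0 : ℕ) = (i : ℕ) := congrArg Fin.val hh
              omega⟩
          · exact ⟨⟨1, by omega⟩, fun hh => by
              have : (1 : ℕ) = (i : ℕ) := congrArg Fin.val hh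
              omega⟩
        obtain ⟨j0, hj0⟩ := hj0
        rw [Matrix.one_apply]
        by_cases hcc : c = c'
        · rw [if_pos hcc, if_pos]
          intro j hj
          rw [hrc, hrc', hcc]
        · rw [if_neg hcc, if_neg]
          intro hcon
          have := hcon j0 hj0
          rw [hrc, hrc'] at this
          exact hcc (Fin.ext this.symm)
      have h1 : (P₁ * M * P₂).rank = m := by
        rw [hId, Matrix.rank_one, Fintype.card_fin]
      calc m = (P₁ * M * P₂).rank := h1.symm
        _ ≤ (P₁ * M).rank := Matrix.rank_mul_le_left _ _
        _ ≤ M.rank := Matrix.rank_mul_le_right _ _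
        _ = frank T i := rfl
end

section
/- If 𝒜 is a cross-d-wise Oddtown on an n-element ground set, then |𝒜| ≤ (d-1)·n. -/
/-!
Replace each set by its indicator vector over a field, and `|A(1) ∩ ⋯ ∩ A(d)| mod 2` by the
multilinear form `∑ₓ ∏ᵢ vᵢ(x)`; the claim holds for such cross-orthogonal families of vector
tuples, by induction on `d`. For `d ≤ 1` the family is empty, since a single member already forms
a tuple of distinct members. Otherwise choose a maximal set `I` of members with linearly
independent first vectors, so `|I| ≤ n`. For `j ∉ I` the first vector of `j` lies in their span,
so multilinearity yields a pivot `t ∈ I` for which the first vector of `t` followed by the other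
vectors of `j` still has nonzero form. Merging that vector with the second vector of `j`
(pointwise product) gives a cross-orthogonal family of `(d-1)`-tuples on the complement of `I`:
its distinct-tuple forms are forms of the original family at the distinct members
`t, j₁, …, j_{d-1}` (the pivot lies in `I`, the `jₖ` do not). Hence `|Iᶜ| ≤ (d-2)n`.
-/

open Finset Function

section MultiDot

variable {R α : Type*} [CommSemiring R] [Fintype α] {d : ℕ}

def multiDot (v : Fin d → α → R) : R := ∑ a, ∏ i, v i a

lemma multiDot_cons (u : α → R) (w : Fin d → α → R) :
    multiDot (Fin.cons u w) = u ⬝ᵥ fun a => ∏ i, w i a := by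
  simp [multiDot, dotProduct, Fin.prod_univ_succ]

lemma multiDot_cons_mul (u v : α → R) (w : Fin d → α → R) :
    multiDot (Fin.cons (u * v) w) = multiDot (Fin.cons u (Fin.cons v w)) := by
  simp [multiDot, Fin.prod_univ_succ, mul_assoc]

lemma multiDot_indicator [DecidableEq α] (S : Fin d → Finset α) :
    multiDot (fun i a => if a ∈ S i then (1 : R) else 0) = (univ.inf S).card := by
  have hinf : ({a | ∀ i, a ∈ S i} : Finset α) = univ.inf S := by ext a; simp [mem_inf]
  simp [multiDot, prod_boole, sum_boole, hinf]

lemma exists_multiDot_cons_ne_zero_of_mem_span {s : Set (α → R)} {u : α → R}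
    {w : Fin d → α → R} (hu : u ∈ Submodule.span R s) (h : multiDot (Fin.cons u w) ≠ 0) :
    ∃ v ∈ s, multiDot (Fin.cons v w) ≠ 0 := by
  by_contra! hs
  simp only [multiDot_cons] at h hs
  refine h (Submodule.span_induction hs (by simp) (fun x y _ _ hx hy => ?_)
    (fun c x _ hx => ?_) hu)
  · rw [add_dotProduct, hx, hy, add_zero]
  · rw [smul_dotProduct, hx, smul_zero]

end MultiDot

structure IsCrossOrthogonal {R α ι : Type*} [CommSemiring R] [Fintype α] {d : ℕ}
    (f : ι → Fin d → α → R) : Prop where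
  multiDot_ne_zero (j : ι) : multiDot (f j) ≠ 0
  multiDot_eq_zero (g : Fin d → ι) : Injective g → multiDot (fun i => f (g i) i) = 0

namespace IsCrossOrthogonal

variable {R K α ι : Type*} [CommSemiring R] [Field K] [Fintype α] {d : ℕ}

lemma isEmpty {f : ι → Fin d → α → R} (hf : IsCrossOrthogonal f) (hd : d ≤ 1) : IsEmpty ι := by
  have : Subsingleton (Fin d) := Fin.subsingleton_iff_le_one.mpr hd
  exact ⟨fun j => hf.multiDot_ne_zero j
    (hf.multiDot_eq_zero (fun _ => j) (injective_of_subsingleton _))⟩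

lemma merge {f : ι → Fin (d + 2) → α → R} (hf : IsCrossOrthogonal f) {I : Set ι}
    (t : {j // j ∉ I} → ι) (ht : ∀ j, t j ∈ I)
    (hpivot : ∀ j, multiDot (Fin.cons (f (t j) 0) (Fin.tail (f j))) ≠ 0) :
    IsCrossOrthogonal fun j : {j // j ∉ I} =>
      (Fin.cons (f (t j) 0 * f j 1) (fun i => f j i.succ.succ) : Fin (d + 1) → α → R) := by
  have tail_eq (j : ι) : Fin.tail (f j) = Fin.cons (f j 1) (fun i => f j i.succ.succ) := by
    ext i : 1; exact Fin.cases rfl (fun _ => rfl) i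
  refine ⟨fun j => ?_, fun q hq => ?_⟩
  · rw [multiDot_cons_mul, ← tail_eq]
    exact hpivot j
  · let B : Fin (d + 2) → ι := Fin.cons (t (q 0)) fun i => q i
    have hB : Injective B := by
      refine Fin.cons_injective_iff.mpr ⟨?_, Subtype.val_injective.comp hq⟩
      rintro ⟨i, hi⟩
      have hi : (q i : ι) = t (q 0) := hi
      exact (q i).2 (hi ▸ ht (q 0))
    calc multiDot (fun i => (Fin.cons (f (t (q i)) 0 * f (q i) 1) (fun k => f (q i) k.succ.succ)
            : Fin (d + 1) → α → R) i)
        _ = multiDot (Fin.cons (f (t (q 0)) 0 * f (q 0) 1) fun i => f (q i.succ) i.succ.succ) := by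
          congr 1; ext i : 1; exact Fin.cases rfl (fun _ => rfl) i
        _ = multiDot fun i => f (B i) i := by
          rw [multiDot_cons_mul]
          congr 1; ext i : 1; exact Fin.cases rfl (Fin.cases rfl fun _ => rfl) i
        _ = 0 := hf.multiDot_eq_zero B hB

theorem card_le [Fintype ι] {f : ι → Fin d → α → K} (hf : IsCrossOrthogonal f) :
    Fintype.card ι ≤ (d - 1) * Fintype.card α := by
  induction d generalizing ι with
  | zero => simpa using Fintype.card_eq_zero_iff.mpr (hf.isEmpty zero_le_one)
  | succ d ih =>
    rcases d with _ | d
    · simpa using Fintype.card_eq_zero_iff.mpr (hf.isEmpty le_rfl)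
    classical
    obtain ⟨I, -, -, hspan, hI⟩ := exists_linearIndepOn_extension (K := K) (v := fun j => f j 0)
      (linearIndepOn_empty K _) (Set.empty_subset Set.univ)
    have hpivot (j : {j // j ∉ I}) :
        ∃ t ∈ I, multiDot (Fin.cons (f t 0) (Fin.tail (f j))) ≠ 0 := by
      have hj := hf.multiDot_ne_zero j
      rw [← Fin.cons_self_tail (f j)] at hj
      obtain ⟨_, ⟨t, ht, rfl⟩, hne⟩ :=
        exists_multiDot_cons_ne_zero_of_mem_span (hspan ⟨j, trivial, rfl⟩) hj
      exact ⟨t, ht, hne⟩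
    choose t ht hpivot using hpivot
    have hcompl := ih (hf.merge t ht hpivot)
    have hIcard : Fintype.card I ≤ Fintype.card α := by
      simpa using hI.fintype_card_le_finrank
    have hsplit : Fintype.card ι = Fintype.card I + Fintype.card {j // j ∉ I} := by
      rw [← Fintype.card_sum]
      exact Fintype.card_congr (Equiv.sumCompl (· ∈ I)).symm
    simp only [add_tsub_cancel_right] at hcompl ⊢
    linarith

end IsCrossOrthogonal

theorem cross_d_wise_oddtown_general {n d : ℕ}
    (𝒜 : Finset (Fin d → Finset (Fin n)))
    (hodd : ∀ A ∈ 𝒜, Odd (Finset.univ.inf A).card)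
    (heven : ∀ B : Fin d → (Fin d → Finset (Fin n)),
      (∀ i, B i ∈ 𝒜) → Function.Injective B →
      Even (Finset.univ.inf (fun i : Fin d => B i i)).card) :
    𝒜.card ≤ (d - 1) * n := by
  classical
  have h𝒜 : IsCrossOrthogonal fun (A : 𝒜) (i : Fin d) (x : Fin n) =>
      if x ∈ A.1 i then (1 : ZMod 2) else 0 := by
    refine ⟨fun A => ?_, fun B hB => ?_⟩
    · rw [multiDot_indicator, ZMod.natCast_ne_zero_iff_odd]
      exact hodd A A.2
    · rw [multiDot_indicator, ZMod.natCast_eq_zero_iff_even]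
      exact heven (fun i => B i) (fun i => (B i).2) (Subtype.val_injective.comp hB)
  simpa using h𝒜.card_le

/-- If `𝒜` is a cross-`d`-wise Oddtown on an `n`-element ground set (a family of ordered
`d`-tuples of subsets of `[n]` such that `|A(1) ∩ ⋯ ∩ A(d)|` is odd for each `A ∈ 𝒜`, while
`|A_1(1) ∩ ⋯ ∩ A_d(d)|` is even for all pairwise distinct `A_1, …, A_d ∈ 𝒜`), then
`|𝒜| ≤ (d-1)·n`. -/
theorem cross_d_wise_oddtown {n d : ℕ} (hd : 2 ≤ d)
    (𝒜 : Finset (Fin d → Finset (Fin n)))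
    (hodd : ∀ A ∈ 𝒜, Odd (Finset.univ.inf A).card)
    (heven : ∀ B : Fin d → (Fin d → Finset (Fin n)),
      (∀ i, B i ∈ 𝒜) → Function.Injective B →
      Even (Finset.univ.inf (fun i : Fin d => B i i)).card) :
    𝒜.card ≤ (d - 1) * n :=
  cross_d_wise_oddtown_general 𝒜 hodd heven
end

section
/- If 𝒜 is a family of subsets of an n-element set such that |A| is odd for every A ∈ 𝒜 and |A_1 ∩ ... ∩ A_d| is even for every d pairwise distinct A_1,...,A_d ∈ 𝒜, then |𝒜| ≤ (d-1)·n. -/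
/-!
Identify a set with its characteristic vector in `𝔽₂ⁿ`. If `|𝒜| > (d-1)n`, then `d - 1` times in a
row one can set aside at most `n` members spanning the vectors of all remaining ones; this yields a
member `A` and `d` pairwise disjoint subfamilies of `𝒜` (one of them `{A}`), each summing to the
vector of `A`. As `|A|` is odd, `1 = ∑ₓ 1_A(x)^d`, and expanding each of the `d` factors by
multilinearity rewrites this as the sum of `|B₁ ∩ ⋯ ∩ B_d| mod 2` over choices of one member from
each subfamily. These `B_j` are pairwise distinct, so every term vanishes.
-/
open Finset Module Submodule Function

section Spanning

variable {ι M : Type*}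

theorem exists_subset_card_le_finrank_subset_span {K : Type*} [DivisionRing K] [AddCommGroup M]
    [Module K M] [FiniteDimensional K M] (f : ι → M) (s : Finset ι) :
    ∃ t ⊆ s, #t ≤ finrank K M ∧ f '' s ⊆ span K (f '' t) := by
  obtain ⟨b, hbs, -, hspan, hli⟩ :=
    exists_linearIndepOn_extension (K := K) (v := f) (linearIndepOn_empty K f) (Set.empty_subset _)
  lift b to Finset ι using s.finite_toSet.subset hbs
  exact ⟨b, mod_cast hbs, by simpa using hli.fintype_card_le_finrank, hspan⟩

theorem exists_subset_sum_eq_of_mem_span [AddCommMonoid M] [Module (ZMod 2) M] {f : ι → M}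
    {s : Finset ι} {v : M} (hv : v ∈ span (ZMod 2) (f '' s)) : ∃ t ⊆ s, ∑ i ∈ t, f i = v := by
  classical
  obtain ⟨c, rfl⟩ := (mem_span_image_finset_iff_exists_fun' (ZMod 2)).mp hv
  refine ⟨{i ∈ s | c i = 1}, filter_subset _ _, ?_⟩
  rw [sum_filter]
  refine sum_congr rfl fun i _ => ?_
  rcases (by decide : ∀ a : ZMod 2, a = 0 ∨ a = 1) (c i) with h | h <;> simp [h]

theorem exists_pairwise_disjoint_subsets_sum_eq_of_mul_finrank_lt [DecidableEq ι] [AddCommGroup M]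
    [Module (ZMod 2) M] [FiniteDimensional (ZMod 2) M] (f : ι → M) (e : ℕ) (s : Finset ι)
    (hs : e * finrank (ZMod 2) M < #s) :
    ∃ a ∈ s, ∃ T : Fin (e + 1) → Finset ι,
      (∀ j, T j ⊆ s) ∧ Pairwise (Disjoint on T) ∧ ∀ j, ∑ i ∈ T j, f i = f a := by
  induction e generalizing s with
  | zero =>
    obtain ⟨a, ha⟩ := card_pos.mp (by simpa using hs)
    exact ⟨a, ha, fun _ => {a}, by simpa using ha,
      (Subsingleton.pairwise : Pairwise (α := Fin 1) _), by simp⟩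
  | succ e ih =>
    obtain ⟨t, hts, htcard, hspan⟩ := exists_subset_card_le_finrank_subset_span (K := ZMod 2) f s
    obtain ⟨a, ha, T, hT, hTdisj, hTsum⟩ := ih (s \ t) (by rw [card_sdiff_of_subset hts]; lia)
    have has : a ∈ s := (mem_sdiff.mp ha).1
    obtain ⟨t₀, ht₀t, ht₀sum⟩ := exists_subset_sum_eq_of_mem_span (hspan ⟨a, has, rfl⟩)
    have ht₀T (j) : Disjoint t₀ (T j) :=
      disjoint_of_subset_left ht₀t <| disjoint_of_subset_right (hT j) disjoint_sdiff
    refine ⟨a, has, Fin.cons t₀ T, Fin.cases (ht₀t.trans hts) fun j => (hT j).trans sdiff_subset,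
      pairwise_fin_succ_iff.mpr ⟨fun j => (ht₀T j).symm, ht₀T, fun i j hij => hTdisj hij⟩,
      Fin.cases ht₀sum hTsum⟩

end Spanning

namespace Finset

variable {α ι : Type*} [Fintype α] [DecidableEq α]

def charVec (A : Finset α) : α → ZMod 2 := fun x => if x ∈ A then 1 else 0

theorem natCast_card_inf_eq_sum_prod_charVec [Fintype ι] (B : ι → Finset α) :
    (#(univ.inf B) : ZMod 2) = ∑ x, ∏ i, (B i).charVec x := by
  simp only [charVec, Fintype.prod_boole, sum_boole]
  congr 2
  ext x
  simp [mem_inf]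

theorem natCast_card_eq_sum_card_inf_of_sum_charVec_eq [Fintype ι] [DecidableEq ι] [Nonempty ι]
    {A : Finset α} {T : ι → Finset (Finset α)} (hT : ∀ i, ∑ B ∈ T i, B.charVec = A.charVec) :
    (#A : ZMod 2) = ∑ r ∈ Fintype.piFinset T, (#(univ.inf r) : ZMod 2) := by
  calc (#A : ZMod 2) = #(univ.inf fun _ : ι => A) := by rw [inf_const univ_nonempty]
    _ = ∑ x, ∏ i, ∑ B ∈ T i, B.charVec x := by
      simp only [natCast_card_inf_eq_sum_prod_charVec, ← sum_apply, hT]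
    _ = ∑ r ∈ Fintype.piFinset T, (#(univ.inf r) : ZMod 2) := by
      simp only [prod_univ_sum, natCast_card_inf_eq_sum_prod_charVec]
      exact sum_comm

end Finset

theorem Fintype.injective_of_mem_piFinset {ι β : Type*} [Fintype ι] [DecidableEq ι]
    {T : ι → Finset β} (hT : Pairwise (Disjoint on T)) {r : ι → β} (hr : r ∈ piFinset T) :
    Injective r := by
  intro i j hrij
  by_contra hij
  exact disjoint_left.mp (hT hij) (mem_piFinset.mp hr i) (hrij ▸ mem_piFinset.mp hr j)

/-- Vu's `d`-wise Oddtown theorem: if every member of `𝒜 ⊆ 2^[n]` has odd size while the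
intersection of any `d` pairwise distinct members is even, then `|𝒜| ≤ (d-1)·n`. -/
theorem d_wise_oddtown {n d : ℕ} (hd : 2 ≤ d)
    (𝒜 : Finset (Finset (Fin n)))
    (hodd : ∀ A ∈ 𝒜, Odd A.card)
    (heven : ∀ B : Fin d → Finset (Fin n),
      (∀ i, B i ∈ 𝒜) → Function.Injective B →
      Even (Finset.univ.inf B).card) :
    𝒜.card ≤ (d - 1) * n := by
  by_contra! hlarge
  obtain ⟨e, rfl⟩ : ∃ e, d = e + 1 := ⟨d - 1, by lia⟩
  obtain ⟨A, hA, T, hT𝒜, hTdisj, hTsum⟩ :=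
    exists_pairwise_disjoint_subsets_sum_eq_of_mul_finrank_lt charVec e 𝒜 (by simpa using hlarge)
  have hexpand := natCast_card_eq_sum_card_inf_of_sum_charVec_eq hTsum
  rw [(hodd A hA).natCast_zmod_two, sum_eq_zero fun r hr => ?_] at hexpand
  · exact one_ne_zero hexpand
  · exact (heven r (fun i => hT𝒜 i (Fintype.mem_piFinset.mp hr i))
      (Fintype.injective_of_mem_piFinset hTdisj hr)).natCast_zmod_two
end

section
/- (Frankl–Wilson-type special case) Let p be a prime and L ⊆ F_p. If ℱ ⊆ 2^[n] satisfies |A| mod p ∉ L for all A ∈ ℱ, and |A ∩ B| mod p ∈ L for all distinct A, B ∈ ℱ, then |ℱ| ≤ ∑_{s=0}^{|L|} C(n, s). -/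
/-! The polynomial method. To `A ∈ ℱ` attach the function `f_A(S) = ∏_{l ∈ L} (|A ∩ S| - l)`
on subsets of `[n]`. By the hypotheses `f_A(A) ≠ 0` and `f_A(B) = 0` for `B ≠ A`, so the `f_A`
are linearly independent over `F_p`. Each `f_A` is a polynomial of degree `≤ |L|` in the
coordinates `[i ∈ S]`, and since these are idempotent it is a combination of the monomials
`∏_{i ∈ T} [i ∈ S] = [T ⊆ S]` with `|T| ≤ |L|`; there are `∑_{s ≤ |L|} C(n, s)` of them. -/

open Finset Module Submodule

theorem linearIndependent_of_eval_ne_zero_of_eval_eq_zero {R ι β : Type*} [CommRing R]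
    [NoZeroDivisors R] [Fintype ι] {v : ι → β → R} (x : ι → β)
    (hdiag : ∀ i, v i (x i) ≠ 0) (hoff : ∀ i j, i ≠ j → v i (x j) = 0) :
    LinearIndependent R v := by
  rw [Fintype.linearIndependent_iff]
  intro g hg i
  have h := congrFun hg (x i)
  simp only [Finset.sum_apply, Pi.smul_apply, smul_eq_mul, Pi.zero_apply] at h
  rw [sum_eq_single i (fun j _ hji => by rw [hoff j i hji, mul_zero])
    (fun hi => absurd (mem_univ i) hi)] at h
  exact (mul_eq_zero.mp h).resolve_right (hdiag i)

theorem card_filter_card_le_eq_sum_choose {α : Type*} [Fintype α] (d : ℕ) :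
    #{T : Finset α | #T ≤ d} = ∑ s ∈ range (d + 1), (Fintype.card α).choose s := by
  rw [card_eq_sum_card_fiberwise (f := card) (t := range (d + 1))
    (fun T hT => by
      simp only [coe_filter, Set.mem_ofPred_eq, coe_range, Set.mem_Iio] at hT ⊢
      omega)]
  refine sum_congr rfl fun s hs => ?_
  rw [← card_univ, ← card_powersetCard, powersetCard_eq_filter, filter_filter, powerset_univ]
  congr 1
  ext T
  simp only [mem_filter, mem_univ, true_and, mem_range] at hs ⊢
  omega

namespace SetFunction

variable (R : Type*) {α : Type*} [CommRing R] [DecidableEq α]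

def subsetIndicator (T : Finset α) : Finset α → R :=
  fun S => if T ⊆ S then 1 else 0

variable (α) in
def lowDegree (d : ℕ) : Submodule R (Finset α → R) :=
  span R (subsetIndicator R '' {T | #T ≤ d})

variable {R}

theorem subsetIndicator_mul (T T' : Finset α) :
    subsetIndicator R T * subsetIndicator R T' = subsetIndicator R (T ∪ T') := by
  ext S
  by_cases hT : T ⊆ S <;> by_cases hT' : T' ⊆ S <;>
    simp [subsetIndicator, union_subset_iff, hT, hT']

theorem subsetIndicator_empty : subsetIndicator R (∅ : Finset α) = 1 := by
  ext S
  simp [subsetIndicator]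

theorem subsetIndicator_mem_lowDegree {T : Finset α} {d : ℕ} (hT : #T ≤ d) :
    subsetIndicator R T ∈ lowDegree R α d :=
  subset_span ⟨T, hT, rfl⟩

theorem one_mem_lowDegree (d : ℕ) : (1 : Finset α → R) ∈ lowDegree R α d :=
  subsetIndicator_empty (α := α) (R := R) ▸ subsetIndicator_mem_lowDegree (Nat.zero_le d)

theorem lowDegree_mul_le (a b : ℕ) :
    lowDegree R α a * lowDegree R α b ≤ lowDegree R α (a + b) := by
  rw [lowDegree, lowDegree, span_mul_span]
  apply span_le.mpr
  rintro _ ⟨_, ⟨T, hT, rfl⟩, _, ⟨T', hT', rfl⟩, rfl⟩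
  change subsetIndicator R T * subsetIndicator R T' ∈ _
  rw [subsetIndicator_mul]
  exact subsetIndicator_mem_lowDegree ((card_union_le T T').trans (add_le_add hT hT'))

theorem mul_mem_lowDegree {a b : ℕ} {f g : Finset α → R} (hf : f ∈ lowDegree R α a)
    (hg : g ∈ lowDegree R α b) : f * g ∈ lowDegree R α (a + b) :=
  lowDegree_mul_le a b (mul_mem_mul hf hg)

theorem prod_mem_lowDegree {ι : Type*} (s : Finset ι) {f : ι → Finset α → R}
    (hf : ∀ i ∈ s, f i ∈ lowDegree R α 1) : ∏ i ∈ s, f i ∈ lowDegree R α #s := by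
  classical
  induction s using Finset.induction_on with
  | empty => exact one_mem_lowDegree 0
  | insert i s hi ih =>
    rw [prod_insert hi, card_insert_of_notMem hi, add_comm]
    exact mul_mem_lowDegree (hf i (mem_insert_self i s))
      (ih fun j hj => hf j (mem_insert_of_mem hj))

theorem card_inter_eq_sum_subsetIndicator (A : Finset α) :
    (fun S => ((#(A ∩ S) : ℕ) : R)) = ∑ i ∈ A, subsetIndicator R {i} := by
  ext S
  simp [subsetIndicator, Finset.sum_apply]

theorem card_inter_sub_mem_lowDegree_one (A : Finset α) (c : R) :
    (fun S => (#(A ∩ S) : R) - c) ∈ lowDegree R α 1 := by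
  have hc : (fun S => (#(A ∩ S) : R) - c) = (fun S => (#(A ∩ S) : R)) - c • 1 := by
    ext S; simp
  rw [hc, card_inter_eq_sum_subsetIndicator]
  exact sub_mem (sum_mem fun i _ => subsetIndicator_mem_lowDegree (card_singleton i).le)
    (smul_mem _ c (one_mem_lowDegree 1))

theorem finrank_lowDegree_le [Fintype α] {K : Type*} [Field K] (d : ℕ) :
    finrank K (lowDegree K α d) ≤ ∑ s ∈ range (d + 1), (Fintype.card α).choose s := by
  have h : lowDegree K α d =
      span K (Set.range fun T : {T : Finset α // #T ≤ d} => subsetIndicator K T.1) := by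
    rw [lowDegree, Set.image_eq_range]; rfl
  rw [h, ← card_filter_card_le_eq_sum_choose, ← Fintype.card_subtype]
  exact finrank_range_le_card _

def intersectionPolynomial (L : Finset R) (A : Finset α) : Finset α → R :=
  ∏ l ∈ L, fun S => (#(A ∩ S) : R) - l

theorem intersectionPolynomial_mem_lowDegree (L : Finset R) (A : Finset α) :
    intersectionPolynomial L A ∈ lowDegree R α #L :=
  prod_mem_lowDegree L fun l _ => card_inter_sub_mem_lowDegree_one A l

theorem intersectionPolynomial_apply_eq_zero_iff [IsDomain R] (L : Finset R) (A S : Finset α) :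
    intersectionPolynomial L A S = 0 ↔ (#(A ∩ S) : R) ∈ L := by
  simp [intersectionPolynomial, Finset.prod_apply, prod_eq_zero_iff, sub_eq_zero]

end SetFunction

open SetFunction

/-- The Frankl–Wilson theorem on forbidden intersections: if `L ⊆ F_p` and `ℱ ⊆ 2^[n]` is such
that `|A| mod p ∉ L` for every `A ∈ ℱ` while `|A ∩ B| mod p ∈ L` for all distinct `A, B ∈ ℱ`,
then `|ℱ| ≤ ∑_{s=0}^{|L|} C(n,s)`. -/
theorem frankl_wilson {p : ℕ} [Fact p.Prime] {n : ℕ} (L : Finset (ZMod p))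
    (ℱ : Finset (Finset (Fin n)))
    (h1 : ∀ A ∈ ℱ, ((A.card : ZMod p) ∉ L))
    (h2 : ∀ A ∈ ℱ, ∀ B ∈ ℱ, A ≠ B → (((A ∩ B).card : ZMod p) ∈ L)) :
    ℱ.card ≤ ∑ s ∈ Finset.range (L.card + 1), n.choose s := by
  have hv : LinearIndependent (ZMod p) fun A : ℱ => intersectionPolynomial L A.1 := by
    refine linearIndependent_of_eval_ne_zero_of_eval_eq_zero (fun A => A.1) (fun A => ?_)
      (fun A B hAB => ?_)
    · rw [Ne, intersectionPolynomial_apply_eq_zero_iff, inter_self]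
      exact h1 A A.2
    · exact (intersectionPolynomial_apply_eq_zero_iff L A.1 B.1).2
        (h2 A A.2 B B.2 (Subtype.coe_ne_coe.2 hAB))
  have hspan : span (ZMod p) (Set.range fun A : ℱ => intersectionPolynomial L A.1) ≤
      lowDegree (ZMod p) (Fin n) #L :=
    span_le.2 (Set.range_subset_iff.2 fun A => intersectionPolynomial_mem_lowDegree L A.1)
  have hcard : Fintype.card ℱ ≤ finrank (ZMod p) (lowDegree (ZMod p) (Fin n) #L) :=
    finrank_span_eq_card hv ▸ finrank_mono hspan
  simpa using hcard.trans (finrank_lowDegree_le #L)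
end

section
/- Let T : A^d → F be a semi-diagonal tensor and a ∈ A^d a tuple with T(a) ≠ 0 maximizing the number of distinct coordinates |{a(1),...,a(d)}|. If the coordinate a(i) appears at least twice among a(1),...,a(d), then for every b ∈ A with T(a(1),...,a(i-1), b, a(i+1),...,a(d)) ≠ 0, we have b ∈ {a(1),...,a(d)}. -/
/-- Claim 1 of the main proof: let `T : A^d → F` be semi-diagonal and let `a` be a tuple with
`T a ≠ 0` maximizing the number of distinct coordinates. If the coordinate `a i` appears at
least twice in `a`, then every `b ∈ A` for which replacing the `i`-th coordinate of `a` by `b`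
gives a tuple with nonzero `T`-value must already appear as a coordinate of `a`. -/
theorem support_subset_of_repeated {F : Type} [Field F] {A : Type} [Fintype A] [DecidableEq A]
    {d : ℕ} (hd : 2 ≤ d) (T : (Fin d → A) → F) (hT : SemiDiagonal T)
    (a : Fin d → A) (ha : T a ≠ 0)
    (hmax : ∀ c : Fin d → A, T c ≠ 0 →
      (Finset.image c Finset.univ).card ≤ (Finset.image a Finset.univ).card)
    (i : Fin d) (hi : ∃ j : Fin d, j ≠ i ∧ a j = a i)
    (b : A) (hb : T (Function.update a i b) ≠ 0) :
    b ∈ Finset.image a Finset.univ := by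
  by_contra hbm
  obtain ⟨j, hji, hja⟩ := hi
  set c := Function.update a i b with hc
  have hsub : insert b (Finset.image a Finset.univ) ⊆ Finset.image c Finset.univ := by
    intro x hx
    rcases Finset.mem_insert.mp hx with hxb | hx
    · exact Finset.mem_image.mpr ⟨i, Finset.mem_univ i, by rw [hc, Function.update_self, hxb]⟩
    · obtain ⟨k, -, rfl⟩ := Finset.mem_image.mp hx
      by_cases hk : k = i
      · subst hk
        exact Finset.mem_image.mpr ⟨j, Finset.mem_univ j,
          by rw [hc, Function.update_of_ne hji, hja]⟩
      · exact Finset.mem_image.mpr ⟨k, Finset.mem_univ k,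
          by rw [hc, Function.update_of_ne hk]⟩
  have h1 : (Finset.image a Finset.univ).card + 1 ≤ (Finset.image c Finset.univ).card := by
    have := Finset.card_le_card hsub
    rwa [Finset.card_insert_of_notMem hbm] at this
  have := hmax c hb
  omega
end

section
/- For tuples b, b' ∈ A^d with T(b), T(b') ≠ 0 and {b} = {b'} = S connected by a path in the graph G on such tuples where two tuples are adjacent iff they differ in exactly one coordinate: if the index j ∈ [d] is such that no tuple c on the path has c(j) appearing at least twice among its coordinates, then b(j) = b'(j). -/
/-- Claim 2 of the main proof: let `𝒜` be the set of tuples `c ∈ A^d` with `T c ≠ 0` whose set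
of coordinates equals `S`, and let `G` be the graph on `𝒜` joining two tuples iff they differ
in exactly one coordinate. If `b` and `b'` are connected by a walk in `G`, and `j` is an index
such that no tuple `c` on the walk has its `j`-th coordinate appearing at least twice among its
coordinates, then `b j = b' j`. -/
theorem not_good_coordinate_fixed {F : Type} [Field F] {A : Type} [Fintype A] [DecidableEq A]
    {d : ℕ} (T : (Fin d → A) → F) (S : Finset A)
    (G : SimpleGraph {c : Fin d → A // T c ≠ 0 ∧ Finset.image c Finset.univ = S})
    (hG : ∀ c c', G.Adj c c' ↔
      (c.1 ≠ c'.1 ∧ ∃ j : Fin d, ∀ j' : Fin d, j' ≠ j → c.1 j' = c'.1 j'))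
    (b b' : {c : Fin d → A // T c ≠ 0 ∧ Finset.image c Finset.univ = S})
    (w : G.Walk b b') (j : Fin d)
    (hj : ∀ c ∈ w.support, ¬∃ j' : Fin d, j' ≠ j ∧ c.1 j' = c.1 j) :
    b.1 j = b'.1 j := by
  induction w with
  | nil => rfl
  | @cons u v w h p ih =>
    have hj' : ∀ c ∈ p.support, ¬∃ j' : Fin d, j' ≠ j ∧ c.1 j' = c.1 j := by
      intro c hc
      exact hj c (by simp [SimpleGraph.Walk.support_cons, hc])
    have hu : u ∈ (SimpleGraph.Walk.cons h p).support := by simp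
    have step : u.1 j = v.1 j := by
      obtain ⟨hne, j₀, hj₀⟩ := (hG u v).1 h
      by_contra hne'
      have hjj₀ : j = j₀ := by
        by_contra hc
        exact hne' (hj₀ j hc)
      -- u.1 j ∈ S = image of v, so some coordinate of v equals u.1 j
      have : u.1 j ∈ Finset.image v.1 Finset.univ := by
        have h1 : u.1 j ∈ Finset.image u.1 Finset.univ :=
          Finset.mem_image_of_mem _ (Finset.mem_univ j)
        have h2 : Finset.image u.1 Finset.univ = Finset.image v.1 Finset.univ :=
          u.2.2.trans v.2.2.symm
        rwa [h2] at h1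
      obtain ⟨j'', -, hj''⟩ := Finset.mem_image.1 this
      have hj''ne : j'' ≠ j := by
        rintro rfl
        exact hne' hj''.symm
      have : u.1 j'' = v.1 j'' := hj₀ j'' (hjj₀ ▸ hj''ne)
      exact hj u hu ⟨j'', hj''ne, this.trans hj''⟩
    exact step.trans (ih hj')
end
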